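/- arXiv:1911.06511 — 4 statements merged into one kernel-verified Lean document; each statement's English description precedes it below -/
import Mathlib

section
/- Let G be a simple graph on a finite vertex set V and c : V → ℕ a coloring of V. Suppose i ≠ j are two colors such that every vertex of c⁻¹(i) is adjacent in G to every vertex of c⁻¹(j) (the edges between the two classes form a complete bipartite graph). Let G' be the graph obtained from G by deleting all edges with one endpoint in c⁻¹(i) and the other endpoint in c⁻¹(j). Then a permutation γ of V is a color-preserving automorphism of (G, c) if and only if it is a color-preserving automorphism of (G', c). -/
/-! A color-preserving permutation maps the complete bipartite join of the classes `i` and `j`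
onto itself. Since this join lies inside `G`, the graph `G` is the disjoint union of `G'` and the
join, so a color-preserving permutation preserves `G` exactly when it preserves `G'`. -/

section

variable {V : Type*}

theorem preserves_iff_preserves_sdiff {r s t : V → V → Prop} (γ : V → V)
    (hsr : ∀ u v, s u v → r u v) (ht : ∀ u v, t u v ↔ r u v ∧ ¬s u v)
    (hγ : ∀ u v, s (γ u) (γ v) ↔ s u v) :
    (∀ u v, r (γ u) (γ v) ↔ r u v) ↔ (∀ u v, t (γ u) (γ v) ↔ t u v) := by
  have hr : ∀ u v, r u v ↔ t u v ∨ s u v := fun u v => by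
    rw [ht]
    by_cases h : s u v
    · simp only [h, hsr u v h, not_true_eq_false, and_false, or_true]
    · simp only [h, not_false_eq_true, and_true, or_false]
  constructor
  · intro hrγ u v
    rw [ht, ht, hrγ, hγ]
  · intro htγ u v
    rw [hr, hr, htγ, hγ]

variable {α : Type*}

def BetweenColors (c : V → α) (i j : α) (u v : V) : Prop :=
  (c u = i ∧ c v = j) ∨ (c u = j ∧ c v = i)

theorem betweenColors_map_iff {c : V → α} {γ : V → V} (hc : ∀ v, c (γ v) = c v) (i j : α)
    (u v : V) : BetweenColors c i j (γ u) (γ v) ↔ BetweenColors c i j u v := by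
  simp only [BetweenColors, hc]

theorem SimpleGraph.adj_of_betweenColors {G : SimpleGraph V} {c : V → α} {i j : α}
    (hbip : ∀ u v, c u = i → c v = j → G.Adj u v) {u v : V} :
    BetweenColors c i j u v → G.Adj u v
  | .inl ⟨hu, hv⟩ => hbip u v hu hv
  | .inr ⟨hu, hv⟩ => (hbip v u hv hu).symm

end

theorem stmt_1_general {V : Type*} (G G' : SimpleGraph V) (c : V → ℕ) (i j : ℕ)
    (hbip : ∀ u v : V, c u = i → c v = j → G.Adj u v)
    (hG' : ∀ u v : V, G'.Adj u v ↔
      G.Adj u v ∧ ¬((c u = i ∧ c v = j) ∨ (c u = j ∧ c v = i)))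
    (γ : Equiv.Perm V) :
    ((∀ u v : V, G.Adj (γ u) (γ v) ↔ G.Adj u v) ∧ (∀ v : V, c (γ v) = c v)) ↔
      ((∀ u v : V, G'.Adj (γ u) (γ v) ↔ G'.Adj u v) ∧ (∀ v : V, c (γ v) = c v)) :=
  and_congr_left fun hc =>
    preserves_iff_preserves_sdiff γ (fun _ _ => G.adj_of_betweenColors hbip) hG'
      (betweenColors_map_iff hc i j)

/-- Deleting the edges of a complete bipartite connection between two distinct
color classes does not change the color-preserving automorphism group. -/
theorem stmt_1 {V : Type*} [Fintype V] (G G' : SimpleGraph V) (c : V → ℕ) (i j : ℕ)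
    (hij : i ≠ j)
    (hbip : ∀ u v : V, c u = i → c v = j → G.Adj u v)
    (hG' : ∀ u v : V, G'.Adj u v ↔
      G.Adj u v ∧ ¬((c u = i ∧ c v = j) ∨ (c u = j ∧ c v = i)))
    (γ : Equiv.Perm V) :
    ((∀ u v : V, G.Adj (γ u) (γ v) ↔ G.Adj u v) ∧ (∀ v : V, c (γ v) = c v)) ↔
      ((∀ u v : V, G'.Adj (γ u) (γ v) ↔ G'.Adj u v) ∧ (∀ v : V, c (γ v) = c v)) :=
  stmt_1_general G G' c i j hbip hG' γ
end

section
/- Let G be a simple graph on a finite vertex set V and c : V → ℕ a coloring of V. Suppose the color class c⁻¹(i) induces a complete subgraph of G, and suppose i' ≠ j' are two colors such that every vertex of c⁻¹(i') is adjacent in G to every vertex of c⁻¹(j'). Let G' be the graph obtained from G by simultaneously deleting all edges with both endpoints in c⁻¹(i) and all edges with one endpoint in c⁻¹(i') and the other in c⁻¹(j'). Then the color-preserving automorphism group of (G', c) equals the color-preserving automorphism group of (G, c). -/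
/-! The deleted edges form the graph `H` of pairs of distinct vertices whose colors are
`(i, i)` or `{i', j'}`; the hypotheses say exactly that `H ≤ G` and `G' = G \ H`, so
`G = G' ⊔ H`. Since `H` is defined by colors alone, every color-preserving permutation is
an automorphism of `H`, and such a permutation then preserves `G` iff it preserves `G \ H`. -/

namespace SimpleGraph

variable {V : Type*} {G H : SimpleGraph V} {γ : Equiv.Perm V}

theorem sdiff_adj_perm_iff (hG : ∀ u v, G.Adj (γ u) (γ v) ↔ G.Adj u v)
    (hH : ∀ u v, H.Adj (γ u) (γ v) ↔ H.Adj u v) (u v : V) :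
    (G \ H).Adj (γ u) (γ v) ↔ (G \ H).Adj u v := by
  simp only [sdiff_adj, hG, hH]

theorem adj_perm_iff_of_sdiff (hHG : H ≤ G)
    (hGH : ∀ u v, (G \ H).Adj (γ u) (γ v) ↔ (G \ H).Adj u v)
    (hH : ∀ u v, H.Adj (γ u) (γ v) ↔ H.Adj u v) (u v : V) :
    G.Adj (γ u) (γ v) ↔ G.Adj u v := by
  rw [← sdiff_sup_cancel hHG]
  simp only [sup_adj, hGH, hH]

theorem sdiff_adj_perm_iff_adj_perm (hHG : H ≤ G)
    (hH : ∀ u v, H.Adj (γ u) (γ v) ↔ H.Adj u v) :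
    (∀ u v, (G \ H).Adj (γ u) (γ v) ↔ (G \ H).Adj u v) ↔
      ∀ u v, G.Adj (γ u) (γ v) ↔ G.Adj u v :=
  ⟨fun hGH => adj_perm_iff_of_sdiff hHG hGH hH, fun hG => sdiff_adj_perm_iff hG hH⟩

theorem fromRel_comp_adj_perm_iff {α : Type*} {c : V → α} (r : α → α → Prop)
    (hc : ∀ v, c (γ v) = c v) (u v : V) :
    (fromRel fun x y => r (c x) (c y)).Adj (γ u) (γ v) ↔
      (fromRel fun x y => r (c x) (c y)).Adj u v := by
  simp only [fromRel_adj, hc, γ.injective.ne_iff]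

end SimpleGraph

open SimpleGraph in
theorem stmt_2_general {V : Type*} (G G' : SimpleGraph V) (c : V → ℕ) (i i' j' : ℕ)
    (hcomplete : ∀ u v : V, c u = i → c v = i → u ≠ v → G.Adj u v)
    (hbip : ∀ u v : V, c u = i' → c v = j' → G.Adj u v)
    (hG' : ∀ u v : V, G'.Adj u v ↔
      G.Adj u v ∧ ¬(c u = i ∧ c v = i) ∧
        ¬((c u = i' ∧ c v = j') ∨ (c u = j' ∧ c v = i'))) :
    {γ : Equiv.Perm V |
        (∀ u v : V, G'.Adj (γ u) (γ v) ↔ G'.Adj u v) ∧ (∀ v : V, c (γ v) = c v)} =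
      {γ : Equiv.Perm V |
        (∀ u v : V, G.Adj (γ u) (γ v) ↔ G.Adj u v) ∧ (∀ v : V, c (γ v) = c v)} := by
  set H := fromRel fun u v => (c u = i ∧ c v = i) ∨ (c u = i' ∧ c v = j')
  have hG'H : G' = G \ H := by
    ext u v
    have := G.ne_of_adj (a := u) (b := v)
    rw [hG', sdiff_adj, fromRel_adj]
    tauto
  have hHG : H ≤ G := by
    rintro u v ⟨hne, (⟨hu, hv⟩ | ⟨hu, hv⟩) | (⟨hu, hv⟩ | ⟨hu, hv⟩)⟩
    · exact hcomplete u v hu hv hne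
    · exact hbip u v hu hv
    · exact hcomplete u v hv hu hne
    · exact (hbip v u hu hv).symm
  subst hG'H
  ext γ
  exact and_congr_left fun hc => sdiff_adj_perm_iff_adj_perm hHG <|
    fromRel_comp_adj_perm_iff (fun a b => (a = i ∧ b = i) ∨ (a = i' ∧ b = j')) hc

/-- Simultaneously deleting the edges inside a complete color class and the
edges of a complete bipartite connection between two distinct color classes
yields a graph with the same color-preserving automorphism group. -/
theorem stmt_2 {V : Type*} [Fintype V] (G G' : SimpleGraph V) (c : V → ℕ) (i i' j' : ℕ)
    (hcomplete : ∀ u v : V, c u = i → c v = i → u ≠ v → G.Adj u v)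
    (hij : i' ≠ j')
    (hbip : ∀ u v : V, c u = i' → c v = j' → G.Adj u v)
    (hG' : ∀ u v : V, G'.Adj u v ↔
      G.Adj u v ∧ ¬(c u = i ∧ c v = i) ∧
        ¬((c u = i' ∧ c v = j') ∨ (c u = j' ∧ c v = i'))) :
    {γ : Equiv.Perm V |
        (∀ u v : V, G'.Adj (γ u) (γ v) ↔ G'.Adj u v) ∧ (∀ v : V, c (γ v) = c v)} =
      {γ : Equiv.Perm V |
        (∀ u v : V, G.Adj (γ u) (γ v) ↔ G.Adj u v) ∧ (∀ v : V, c (γ v) = c v)} :=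
  stmt_2_general G G' c i i' j' hcomplete hbip hG'
end

section
/- Let G be a simple graph on a finite vertex set V and c : V → ℕ a coloring that is equitable with respect to G. Suppose i ≠ j are two colors such that every vertex of c⁻¹(i) is adjacent in G to every vertex of c⁻¹(j), and let G' be the graph obtained from G by deleting all edges with one endpoint in c⁻¹(i) and the other in c⁻¹(j). Then c is equitable with respect to G'. -/
/-! Deleting edges according to the colours of their ends only: the neighbours of colour `k`
of a vertex of colour `a` are either all deleted (when `(a, k)` is a deleted pair) or all kept,
so their number still depends only on `a` and `k`. -/

namespace SimpleGraph

variable {V α : Type*}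

def IsEquitableColoring (G : SimpleGraph V) (c : V → α) : Prop :=
  ∀ u v : V, c u = c v → ∀ k : α,
    {w : V | G.Adj u w ∧ c w = k}.ncard = {w : V | G.Adj v w ∧ c w = k}.ncard

lemma setOf_adj_color_eq_empty_of_adj_iff {G G' : SimpleGraph V} {c : V → α}
    {P : α → α → Prop} (hG' : ∀ u w : V, G'.Adj u w ↔ G.Adj u w ∧ ¬P (c u) (c w)) {u : V} {k : α}
    (hP : P (c u) k) : {w : V | G'.Adj u w ∧ c w = k} = ∅ := by
  refine Set.eq_empty_of_forall_notMem fun w ⟨hadj, hw⟩ => ?_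
  exact ((hG' u w).1 hadj).2 (hw ▸ hP)

lemma setOf_adj_color_eq_of_adj_iff {G G' : SimpleGraph V} {c : V → α} {P : α → α → Prop}
    (hG' : ∀ u w : V, G'.Adj u w ↔ G.Adj u w ∧ ¬P (c u) (c w)) {u : V} {k : α}
    (hP : ¬P (c u) k) : {w : V | G'.Adj u w ∧ c w = k} = {w : V | G.Adj u w ∧ c w = k} := by
  ext w
  simp only [Set.mem_ofPred_eq, hG']
  constructor
  · rintro ⟨⟨hadj, -⟩, hw⟩
    exact ⟨hadj, hw⟩
  · rintro ⟨hadj, rfl⟩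
    exact ⟨⟨hadj, hP⟩, rfl⟩

theorem IsEquitableColoring.of_adj_iff {G G' : SimpleGraph V} {c : V → α}
    (hc : G.IsEquitableColoring c) (P : α → α → Prop)
    (hG' : ∀ u w : V, G'.Adj u w ↔ G.Adj u w ∧ ¬P (c u) (c w)) :
    G'.IsEquitableColoring c := by
  intro u v huv k
  by_cases hP : P (c u) k
  · rw [setOf_adj_color_eq_empty_of_adj_iff hG' hP,
      setOf_adj_color_eq_empty_of_adj_iff hG' (huv ▸ hP)]
  · rw [setOf_adj_color_eq_of_adj_iff hG' hP, setOf_adj_color_eq_of_adj_iff hG' (huv ▸ hP)]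
    exact hc u v huv k

end SimpleGraph

theorem stmt_4_general {V : Type*} (G G' : SimpleGraph V) (c : V → ℕ) (i j : ℕ)
    (hEq : ∀ u v : V, c u = c v → ∀ k : ℕ,
      {w : V | G.Adj u w ∧ c w = k}.ncard = {w : V | G.Adj v w ∧ c w = k}.ncard)
    (hG' : ∀ u v : V, G'.Adj u v ↔
      G.Adj u v ∧ ¬((c u = i ∧ c v = j) ∨ (c u = j ∧ c v = i))) :
    ∀ u v : V, c u = c v → ∀ k : ℕ,
      {w : V | G'.Adj u w ∧ c w = k}.ncard = {w : V | G'.Adj v w ∧ c w = k}.ncard :=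
  SimpleGraph.IsEquitableColoring.of_adj_iff hEq (fun a b => (a = i ∧ b = j) ∨ (a = j ∧ b = i)) hG'

/-- Deleting the edges of a complete bipartite connection between two distinct
color classes preserves equitability of the coloring. -/
theorem stmt_4 {V : Type*} [Fintype V] (G G' : SimpleGraph V) (c : V → ℕ) (i j : ℕ)
    (hEq : ∀ u v : V, c u = c v → ∀ k : ℕ,
      {w : V | G.Adj u w ∧ c w = k}.ncard = {w : V | G.Adj v w ∧ c w = k}.ncard)
    (hij : i ≠ j)
    (hbip : ∀ u v : V, c u = i → c v = j → G.Adj u v)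
    (hG' : ∀ u v : V, G'.Adj u v ↔
      G.Adj u v ∧ ¬((c u = i ∧ c v = j) ∨ (c u = j ∧ c v = i))) :
    ∀ u v : V, c u = c v → ∀ k : ℕ,
      {w : V | G'.Adj u w ∧ c w = k}.ncard = {w : V | G'.Adj v w ∧ c w = k}.ncard :=
  stmt_4_general G G' c i j hEq hG'
end

section
/- Let G be a simple graph on a finite vertex set V and c : V → ℕ a coloring that is equitable with respect to G. Suppose v ∈ V is such that c⁻¹(c(v)) = {v} (v lies in a singleton color class). Let G' be the graph obtained from G by deleting all edges incident to v. Then a permutation γ of V is a color-preserving automorphism of (G, c) if and only if it is a color-preserving automorphism of (G', c). -/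
/-!
A color-preserving permutation fixes the vertex `v` of the singleton class `{v}`, so it respects
every edge away from `v` exactly when it respects the same edge after deleting the edges at `v`.
The remaining edges are those at `v`, and equitability settles them: `u` has exactly one neighbour
of color `c v` if `u ~ v` and none otherwise, so vertices of equal color are adjacent to `v`
alike, and a color-preserving permutation maps neighbours of `v` to neighbours of `v`.
-/

namespace SimpleGraph

variable {V : Type*} (G : SimpleGraph V) {c : V → ℕ} {v : V}

lemma ncard_adj_and_color_eq_eq_one_iff (hv : ∀ w, c w = c v ↔ w = v) (u : V) :
    {w | G.Adj u w ∧ c w = c v}.ncard = 1 ↔ G.Adj u v := by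
  simp_rw [hv]
  by_cases huv : G.Adj u v
  · have hset : {w | G.Adj u w ∧ w = v} = {v} :=
      Set.ext fun w => ⟨And.right, by rintro rfl; exact ⟨huv, rfl⟩⟩
    simp [hset, huv]
  · have hset : {w | G.Adj u w ∧ w = v} = ∅ :=
      Set.eq_empty_of_forall_notMem fun w ⟨huw, hw⟩ => huv (hw ▸ huw)
    simp [hset, huv]

lemma adj_singleton_class_iff_of_equitable
    (hEq : ∀ u w, c u = c w → ∀ j,
      {x | G.Adj u x ∧ c x = j}.ncard = {x | G.Adj w x ∧ c x = j}.ncard)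
    (hv : ∀ w, c w = c v ↔ w = v) {u w : V} (huw : c u = c w) :
    G.Adj u v ↔ G.Adj w v := by
  rw [← G.ncard_adj_and_color_eq_eq_one_iff hv, ← G.ncard_adj_and_color_eq_eq_one_iff hv,
    hEq u w huw (c v)]

lemma adj_map_iff_deleteIncidenceSet_adj_map_iff {γ : Equiv.Perm V} (hγv : γ v = v)
    (hγ : ∀ w, G.Adj (γ w) v ↔ G.Adj w v) :
    (∀ u w, G.Adj (γ u) (γ w) ↔ G.Adj u w) ↔
      ∀ u w, (G.deleteIncidenceSet v).Adj (γ u) (γ w) ↔ (G.deleteIncidenceSet v).Adj u w := by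
  have hγ_eq : ∀ x, γ x = v ↔ x = v := fun _ => γ.injective.eq_iff' hγv
  simp only [deleteIncidenceSet_adj, ne_eq, hγ_eq]
  refine ⟨fun h u w => by rw [h], fun h u w => ?_⟩
  by_cases hu : u = v
  · subst hu
    rw [hγv, G.adj_comm, hγ, G.adj_comm]
  by_cases hw : w = v
  · subst hw
    rw [hγv, hγ]
  simpa [hu, hw] using h u w

end SimpleGraph

theorem stmt_9_general {V : Type*} (G G' : SimpleGraph V) (c : V → ℕ)
    (hEq : ∀ u v : V, c u = c v → ∀ j : ℕ,
      {w : V | G.Adj u w ∧ c w = j}.ncard = {w : V | G.Adj v w ∧ c w = j}.ncard)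
    (v : V) (hv : ∀ w : V, c w = c v ↔ w = v)
    (hG' : ∀ u w : V, G'.Adj u w ↔ G.Adj u w ∧ u ≠ v ∧ w ≠ v)
    (γ : Equiv.Perm V) :
    ((∀ u w : V, G.Adj (γ u) (γ w) ↔ G.Adj u w) ∧ (∀ w : V, c (γ w) = c w)) ↔
      ((∀ u w : V, G'.Adj (γ u) (γ w) ↔ G'.Adj u w) ∧ (∀ w : V, c (γ w) = c w)) := by
  obtain rfl : G' = G.deleteIncidenceSet v := by
    ext u w
    rw [hG', SimpleGraph.deleteIncidenceSet_adj]
  refine and_congr_left fun hc => G.adj_map_iff_deleteIncidenceSet_adj_map_iff ?_ ?_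
  · exact (hv (γ v)).mp (hc v)
  · exact fun w => G.adj_singleton_class_iff_of_equitable hEq hv (hc w)

/-- For an equitable coloring, deleting all edges incident to a vertex lying in
a singleton color class does not change the color-preserving automorphism
group. -/
theorem stmt_9 {V : Type*} [Fintype V] (G G' : SimpleGraph V) (c : V → ℕ)
    (hEq : ∀ u v : V, c u = c v → ∀ j : ℕ,
      {w : V | G.Adj u w ∧ c w = j}.ncard = {w : V | G.Adj v w ∧ c w = j}.ncard)
    (v : V) (hv : ∀ w : V, c w = c v ↔ w = v)
    (hG' : ∀ u w : V, G'.Adj u w ↔ G.Adj u w ∧ u ≠ v ∧ w ≠ v)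
    (γ : Equiv.Perm V) :
    ((∀ u w : V, G.Adj (γ u) (γ w) ↔ G.Adj u w) ∧ (∀ w : V, c (γ w) = c w)) ↔
      ((∀ u w : V, G'.Adj (γ u) (γ w) ↔ G'.Adj u w) ∧ (∀ w : V, c (γ w) = c w)) :=
  stmt_9_general G G' c hEq v hv hG' γ
end
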